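/- arXiv:1209.3341 — 3 statements merged into one kernel-verified Lean document; each statement's English description precedes it below -/
import Mathlib

section
/- Let n ≥ 1 and r > 0. For any two distinct points a, b on the sphere S(0, r) in ℝⁿ, there exists a point p ∈ B(0, r) such that for every t ∈ (r/2, √3·r/2), either (0 ∈ B(p,t) and b ∈ B(p,t) and a ∉ B(p,t)) or (a ∈ B(p,t) and b ∈ B(p,t) and 0 ∉ B(p,t)). -/
/-!
Split on the chord length `d = dist a b` against the radius `r`. If `d ≥ r`, centre the ball at
the midpoint of `0` and `b`: it is at distance `r / 2` from both, while by Apollonius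
`dist a p ^ 2 = r ^ 2 / 4 + d ^ 2 / 2 ≥ 3 r ^ 2 / 4`. If `d < r`, centre it at the midpoint of
the chord: `a` and `b` are at distance `d / 2 < r / 2`, while `dist 0 p ^ 2 = r ^ 2 - d ^ 2 / 4`
lies in `(3 r ^ 2 / 4, r ^ 2)`.
-/

open Metric

lemma sqrt_three_mul_half_le {r x : ℝ} (hr : 0 ≤ r) (hx : 0 ≤ x) (h : 3 * r ^ 2 / 4 ≤ x ^ 2) :
    √3 * r / 2 ≤ x := by
  refine (pow_le_pow_iff_left₀ (by positivity) hx two_ne_zero).mp ?_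
  calc (√3 * r / 2) ^ 2 = √3 ^ 2 * r ^ 2 / 4 := by ring
    _ = 3 * r ^ 2 / 4 := by rw [Real.sq_sqrt (by norm_num)]
    _ ≤ x ^ 2 := h

namespace EuclideanGeometry

variable {V P : Type*} [NormedAddCommGroup V] [InnerProductSpace ℝ V] [MetricSpace P]
  [NormedAddTorsor V P] {o a b : P} {r t : ℝ}

lemma dist_midpoint_sq_of_dist_eq (ha : dist a o = r) (hb : dist b o = r) :
    dist (midpoint ℝ a b) o ^ 2 = r ^ 2 - (dist a b / 2) ^ 2 := by
  have h := dist_sq_add_dist_sq_eq_two_mul_dist_midpoint_sq_add_half_dist_sq o a b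
  rw [dist_comm o a, dist_comm o b, dist_comm o, ha, hb] at h
  linarith

lemma dist_midpoint_center_sq_of_dist_eq (ha : dist a o = r) (hb : dist b o = r) :
    dist a (midpoint ℝ o b) ^ 2 = r ^ 2 / 4 + dist a b ^ 2 / 2 := by
  have h := dist_sq_add_dist_sq_eq_two_mul_dist_midpoint_sq_add_half_dist_sq a o b
  rw [ha, dist_comm o b, hb] at h
  linarith

lemma midpoint_center_mem_ball (hr : 0 < r) (hb : dist b o = r) :
    midpoint ℝ o b ∈ ball o r := by
  rw [mem_ball, dist_midpoint_left, dist_comm, hb, Real.norm_two]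
  linarith

lemma midpoint_mem_ball_of_dist_eq (ha : dist a o = r) (hb : dist b o = r) (hab : a ≠ b) :
    midpoint ℝ a b ∈ ball o r := by
  have hr : 0 ≤ r := ha ▸ dist_nonneg
  have hd : 0 < dist a b := dist_pos.mpr hab
  rw [mem_ball, ← sq_lt_sq₀ dist_nonneg hr, dist_midpoint_sq_of_dist_eq ha hb]
  nlinarith

lemma mem_ball_midpoint_center_of_radius_le_dist (hr : 0 < r) (ha : dist a o = r)
    (hb : dist b o = r) (hab : r ≤ dist a b) (ht : t ∈ Set.Ioo (r / 2) (√3 * r / 2)) :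
    o ∈ ball (midpoint ℝ o b) t ∧ b ∈ ball (midpoint ℝ o b) t ∧ a ∉ ball (midpoint ℝ o b) t := by
  have ho : dist o (midpoint ℝ o b) = r / 2 := by
    rw [dist_left_midpoint, dist_comm, hb, Real.norm_two, inv_mul_eq_div]
  have hb' : dist b (midpoint ℝ o b) = r / 2 := by
    rw [dist_right_midpoint, dist_comm, hb, Real.norm_two, inv_mul_eq_div]
  have ha' : √3 * r / 2 ≤ dist a (midpoint ℝ o b) :=
    sqrt_three_mul_half_le hr.le dist_nonneg (by
      rw [dist_midpoint_center_sq_of_dist_eq ha hb]; nlinarith)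
  refine ⟨?_, ?_, ?_⟩
  · rw [mem_ball, ho]; exact ht.1
  · rw [mem_ball, hb']; exact ht.1
  · rw [mem_ball, not_lt]; exact ht.2.le.trans ha'

lemma mem_ball_midpoint_of_dist_lt_radius (ha : dist a o = r) (hb : dist b o = r)
    (hab : dist a b < r) (ht : t ∈ Set.Ioo (r / 2) (√3 * r / 2)) :
    a ∈ ball (midpoint ℝ a b) t ∧ b ∈ ball (midpoint ℝ a b) t ∧ o ∉ ball (midpoint ℝ a b) t := by
  have ha' : dist a (midpoint ℝ a b) = dist a b / 2 := by
    rw [dist_left_midpoint, Real.norm_two, inv_mul_eq_div]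
  have hb' : dist b (midpoint ℝ a b) = dist a b / 2 := by
    rw [dist_right_midpoint, dist_comm, Real.norm_two, inv_mul_eq_div]
  have ho : √3 * r / 2 ≤ dist o (midpoint ℝ a b) :=
    sqrt_three_mul_half_le (dist_nonneg.trans_lt hab).le dist_nonneg (by
      rw [dist_comm, dist_midpoint_sq_of_dist_eq ha hb]
      nlinarith [dist_nonneg (x := a) (y := b)])
  refine ⟨?_, ?_, ?_⟩
  · rw [mem_ball, ha']; linarith [ht.1]
  · rw [mem_ball, hb']; linarith [ht.1]
  · rw [mem_ball, not_lt]; exact ht.2.le.trans ho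

end EuclideanGeometry

open EuclideanGeometry in
theorem stmt_0_general (n : ℕ) (r : ℝ) (hr : 0 < r)
    (a b : EuclideanSpace ℝ (Fin n)) (hab : a ≠ b)
    (ha : a ∈ Metric.sphere (0 : EuclideanSpace ℝ (Fin n)) r)
    (hb : b ∈ Metric.sphere (0 : EuclideanSpace ℝ (Fin n)) r) :
    ∃ p ∈ Metric.ball (0 : EuclideanSpace ℝ (Fin n)) r,
      ∀ t ∈ Set.Ioo (r / 2) (Real.sqrt 3 * r / 2),
        ((0 : EuclideanSpace ℝ (Fin n)) ∈ Metric.ball p t ∧ b ∈ Metric.ball p t ∧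
            a ∉ Metric.ball p t) ∨
        (a ∈ Metric.ball p t ∧ b ∈ Metric.ball p t ∧
            (0 : EuclideanSpace ℝ (Fin n)) ∉ Metric.ball p t) := by
  rw [Metric.mem_sphere] at ha hb
  rcases le_or_gt r (dist a b) with hd | hd
  · exact ⟨midpoint ℝ 0 b, midpoint_center_mem_ball hr hb,
      fun t ht => .inl (mem_ball_midpoint_center_of_radius_le_dist hr ha hb hd ht)⟩
  · exact ⟨midpoint ℝ a b, midpoint_mem_ball_of_dist_eq ha hb hab,
      fun t ht => .inr (mem_ball_midpoint_of_dist_lt_radius ha hb hd ht)⟩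

theorem stmt_0 (n : ℕ) (hn : 1 ≤ n) (r : ℝ) (hr : 0 < r)
    (a b : EuclideanSpace ℝ (Fin n)) (hab : a ≠ b)
    (ha : a ∈ Metric.sphere (0 : EuclideanSpace ℝ (Fin n)) r)
    (hb : b ∈ Metric.sphere (0 : EuclideanSpace ℝ (Fin n)) r) :
    ∃ p ∈ Metric.ball (0 : EuclideanSpace ℝ (Fin n)) r,
      ∀ t ∈ Set.Ioo (r / 2) (Real.sqrt 3 * r / 2),
        ((0 : EuclideanSpace ℝ (Fin n)) ∈ Metric.ball p t ∧ b ∈ Metric.ball p t ∧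
            a ∉ Metric.ball p t) ∨
        (a ∈ Metric.ball p t ∧ b ∈ Metric.ball p t ∧
            (0 : EuclideanSpace ℝ (Fin n)) ∉ Metric.ball p t) :=
  stmt_0_general n r hr a b hab ha hb
end

section
/- Let G ⊆ ℝⁿ be open and f : G → ℝⁿ a local homeomorphism. If F ⊆ G is a compact set on which f is injective, then there exists an open neighborhood U of F with F ⊆ U ⊆ G such that f is injective on U. -/
open Set Topology

namespace IsLocalHomeomorphOn

variable {X Y : Type*} [TopologicalSpace X] [TopologicalSpace Y] {f : X → Y} {s : Set X}

theorem exists_mem_nhds_injOn (hf : IsLocalHomeomorphOn f s) {x : X} (hx : x ∈ s) :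
    ∃ u ∈ 𝓝 x, InjOn f u := by
  obtain ⟨e, hxe, rfl⟩ := hf x hx
  exact ⟨e.source, e.open_source.mem_nhds hxe, e.injOn⟩

theorem exists_isOpen_superset_injOn [T2Space Y] (hf : IsLocalHomeomorphOn f s) (hs : IsOpen s)
    {K : Set X} (hKs : K ⊆ s) (hK : IsCompact K) (hinj : InjOn f K) :
    ∃ U, IsOpen U ∧ K ⊆ U ∧ U ⊆ s ∧ InjOn f U := by
  obtain ⟨t, hto, hKt, htinj⟩ := hinj.exists_isOpen_superset hK
    (fun x hx => hf.continuousAt (hKs hx)) (fun x hx => hf.exists_mem_nhds_injOn (hKs hx))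
  exact ⟨t ∩ s, hto.inter hs, subset_inter hKt hKs, inter_subset_right,
    htinj.mono inter_subset_left⟩

end IsLocalHomeomorphOn

theorem stmt_2 (n : ℕ) (G : Set (EuclideanSpace ℝ (Fin n))) (hG : IsOpen G)
    (f : EuclideanSpace ℝ (Fin n) → EuclideanSpace ℝ (Fin n))
    (hf : IsLocalHomeomorphOn f G)
    (F : Set (EuclideanSpace ℝ (Fin n))) (hFG : F ⊆ G) (hF : IsCompact F)
    (hinj : Set.InjOn f F) :
    ∃ U : Set (EuclideanSpace ℝ (Fin n)), IsOpen U ∧ F ⊆ U ∧ U ⊆ G ∧ Set.InjOn f U :=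
  hf.exists_isOpen_superset_injOn hG hFG hF hinj
end

section
/- Let G ⊆ ℝⁿ be open, f : G → ℝⁿ a local homeomorphism, Q ⊆ ℝⁿ a simply connected and locally path-connected set, and P a connected component of f⁻¹(Q) with compact closure contained in G. Then f maps P homeomorphically onto Q. -/
/-!
On `P` the map `f : P → Q` is a local homeomorphism (`P` is relatively open in `G ∩ f⁻¹ Q`
because `Q` is locally connected) and a closed map with finite fibres (because `closure P` is
compact and meets `f⁻¹ Q` only in `P`), hence a covering map. A covering of a simply connected,
locally path-connected space by a connected space is a homeomorphism: lifting the identity of `Q`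
gives a section `s`, and `s ∘ f` and `id` are two lifts of `f` that agree at one point.
-/

open Set Filter Topology

section

variable {X Y : Type*} [TopologicalSpace X] [TopologicalSpace Y] {f : X → Y} {G P : Set X}
  {Q : Set Y}

theorem IsLocalHomeomorph.of_isOpenMap (hc : Continuous f) (ho : IsOpenMap f)
    (hi : IsLocallyInjective f) : IsLocalHomeomorph f :=
  IsLocalHomeomorph.mk f fun x ↦ by
    obtain ⟨U, hU, hxU, hinj⟩ := hi x
    have : Nonempty X := ⟨x⟩
    exact ⟨.ofContinuousOpen hinj.toPartialEquiv hc.continuousOn ho hU, hxU, fun _ _ ↦ rfl⟩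

theorem closure_connectedComponentIn_inter_subset (F : Set X) (x : X) :
    closure (connectedComponentIn F x) ∩ F ⊆ connectedComponentIn F x := by
  by_cases hx : x ∈ F
  · exact (isPreconnected_connectedComponentIn.subset_closure
      (subset_inter subset_closure (connectedComponentIn_subset F x)) inter_subset_left)
      |>.subset_connectedComponentIn ⟨subset_closure (mem_connectedComponentIn hx), hx⟩
        inter_subset_right
  · simp [connectedComponentIn_eq_empty hx]

theorem IsCoveringMap.exists_homeomorph {E B : Type*} [TopologicalSpace E] [TopologicalSpace B]
    {p : E → B} [Nonempty E] [PreconnectedSpace E] [SimplyConnectedSpace B]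
    [LocallyPathConnectedSpace B] (hp : IsCoveringMap p) : ∃ h : E ≃ₜ B, ⇑h = p := by
  obtain ⟨e₀⟩ := ‹Nonempty E›
  obtain ⟨s, ⟨hs₀, hps⟩, -⟩ :=
    hp.existsUnique_continuousMap_lifts (ContinuousMap.id B) (p e₀) e₀ rfl
  have hsp : s ∘ p = id :=
    hp.eq_of_comp_eq (s.continuous.comp hp.continuous) continuous_id
      (by rw [← Function.comp_assoc, hps]; rfl) e₀ hs₀
  exact ⟨⟨⟨p, s, congrFun hsp, congrFun hps⟩, hp.continuous, s.continuous⟩, rfl⟩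

theorem connectedComponentIn_inter_mem_nhdsWithin [LocallyConnectedSpace Q] {U : Set Y}
    {y : Y} (hy : y ∈ Q) (hU : U ∈ 𝓝 y) : connectedComponentIn (Q ∩ U) y ∈ 𝓝[Q] y := by
  have hcomp : connectedComponentIn ((↑) ⁻¹' U : Set Q) ⟨y, hy⟩ ∈ 𝓝 (⟨y, hy⟩ : Q) :=
    connectedComponentIn_mem_nhds (continuous_subtype_val.continuousAt.preimage_mem_nhds hU)
  refine mem_of_superset (mem_nhds_subtype_iff_nhdsWithin.mp hcomp) ?_
  simpa [Subtype.image_preimage_coe] using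
    continuous_subtype_val.continuousOn.image_connectedComponentIn_subset (s := (↑) ⁻¹' U)
      (a := (⟨y, hy⟩ : Q)) (mem_preimage.mpr (mem_of_mem_nhds hU))

theorem IsLocalHomeomorphOn.connectedComponentIn_mem_nhdsWithin (hf : IsLocalHomeomorphOn f G)
    (hG : IsOpen G) [LocallyConnectedSpace Q] {e : X} (he : e ∈ G ∩ f ⁻¹' Q) :
    connectedComponentIn (G ∩ f ⁻¹' Q) e ∈ 𝓝[f ⁻¹' Q] e := by
  obtain ⟨φ, heφ, rfl⟩ := hf e he.1
  let ψ := φ.restrOpen G hG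
  have heψ : e ∈ ψ.source := ⟨heφ, he.1⟩
  set C := connectedComponentIn (Q ∩ ψ.target) (φ e)
  have hCt : C ⊆ ψ.target := (connectedComponentIn_subset _ _).trans inter_subset_right
  have hC : C ∈ 𝓝[Q] (φ e) :=
    connectedComponentIn_inter_mem_nhdsWithin he.2 (ψ.open_target.mem_nhds (ψ.map_source heψ))
  have hφQ : Tendsto φ (𝓝[φ ⁻¹' Q] e) (𝓝[Q] (φ e)) :=
    (φ.continuousAt heφ).tendsto.inf (tendsto_principal_principal.mpr fun _ ↦ id)
  have hpre : ψ.source ∩ ψ ⁻¹' C ∈ 𝓝[φ ⁻¹' Q] e :=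
    inter_mem (mem_nhdsWithin_of_mem_nhds (ψ.open_source.mem_nhds heψ)) (hφQ hC)
  refine mem_of_superset hpre ?_
  rw [← ψ.symm_image_eq_source_inter_preimage hCt]
  refine (isPreconnected_connectedComponentIn.image _ (ψ.continuousOn_symm.mono hCt))
    |>.subset_connectedComponentIn ⟨φ e, mem_connectedComponentIn ⟨he.2, ψ.map_source heψ⟩,
      ψ.left_inv heψ⟩ ?_
  rintro _ ⟨y, hy, rfl⟩
  refine ⟨(ψ.map_target (hCt hy)).2, ?_⟩
  change ψ (ψ.symm y) ∈ Q
  rw [ψ.right_inv (hCt hy)]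
  exact (connectedComponentIn_subset _ _ hy).1

theorem IsLocalHomeomorphOn.isLocalHomeomorph_restrict (hf : IsLocalHomeomorphOn f G)
    (hPG : P ⊆ G) (hPQ : MapsTo f P Q) (hP : ∀ e ∈ P, P ∈ 𝓝[f ⁻¹' Q] e) :
    IsLocalHomeomorph (hPQ.restrict f P Q) := by
  refine .of_isOpenMap ((hf.continuousOn.mono hPG).mapsToRestrict hPQ)
    (.of_nhds_le fun e ↦ le_of_eq ?_) fun e ↦ ?_
  · have hmap : map f (𝓝[P] e) = 𝓝[Q] (f e) := by
      rw [le_antisymm (nhdsWithin_mono _ hPQ) (nhdsWithin_le_of_mem (hP e e.2))]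
      change map f (𝓝 (e : X) ⊓ 𝓟 (f ⁻¹' Q)) = 𝓝 (f e) ⊓ 𝓟 Q
      rw [map_inf_principal_preimage, hf.map_nhds_eq (hPG e.2)]
    apply map_injective Subtype.val_injective
    rw [map_map, map_nhds_subtype_val, MapsTo.restrict_commutes, ← map_map,
      map_nhds_subtype_val, hmap]
    rfl
  · obtain ⟨φ, heφ, rfl⟩ := hf e (hPG e.2)
    exact ⟨((↑) : P → X) ⁻¹' φ.source, φ.open_source.preimage continuous_subtype_val, heφ,
      fun a ha b hb hab ↦ Subtype.ext (φ.injOn ha hb (congrArg Subtype.val hab))⟩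

theorem isClosedMap_restrict_of_isCompact_closure [T2Space Y] (hPQ : MapsTo f P Q)
    (hfc : ContinuousOn f (closure P)) (hPc : IsCompact (closure P))
    (hP : closure P ∩ f ⁻¹' Q ⊆ P) : IsClosedMap (hPQ.restrict f P Q) := by
  intro C hC
  obtain ⟨t, ht, rfl⟩ := isClosed_induced_iff.mp hC
  have himage : hPQ.restrict f P Q '' ((↑) ⁻¹' t) = (↑) ⁻¹' (f '' (closure P ∩ t)) := by
    ext ⟨y, hy⟩
    constructor
    · rintro ⟨⟨x, hxP⟩, hxt, hxy⟩
      exact ⟨x, ⟨subset_closure hxP, hxt⟩, congrArg Subtype.val hxy⟩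
    · rintro ⟨x, ⟨hxP, hxt⟩, rfl⟩
      exact ⟨⟨x, hP ⟨hxP, hy⟩⟩, hxt, rfl⟩
  rw [himage]
  exact ((hPc.inter_right ht).image_of_continuousOn (hfc.mono inter_subset_left)).isClosed
    |>.preimage continuous_subtype_val

theorem finite_restrict_preimage_singleton [T1Space Y] (hPQ : MapsTo f P Q)
    (hlh : IsLocalHomeomorph (hPQ.restrict f P Q)) (hfc : ContinuousOn f (closure P))
    (hPc : IsCompact (closure P)) (hP : closure P ∩ f ⁻¹' Q ⊆ P) (y : Q) :
    (hPQ.restrict f P Q ⁻¹' {y}).Finite := by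
  refine IsCompact.finite ?_ (.of_openPartialHomeomorph _ subset_rfl fun e _ ↦
    let ⟨φ, heφ, hφ⟩ := hlh e; ⟨φ, heφ, hφ.symm⟩)
  have himage : (↑) '' (hPQ.restrict f P Q ⁻¹' {y}) = closure P ∩ f ⁻¹' {(y : Y)} := by
    ext x
    constructor
    · rintro ⟨⟨x, hxP⟩, hxy, rfl⟩
      exact ⟨subset_closure hxP, congrArg Subtype.val hxy⟩
    · rintro ⟨hxP, hxy⟩
      have hfx : f x = y := hxy
      exact ⟨⟨x, hP ⟨hxP, show f x ∈ Q from hfx ▸ y.2⟩⟩, Subtype.ext hfx, rfl⟩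
  rw [Subtype.isCompact_iff, himage]
  exact hPc.of_isClosed_subset
    (hfc.preimage_isClosed_of_isClosed isClosed_closure isClosed_singleton) inter_subset_left

theorem IsLocalHomeomorphOn.isCoveringMap_restrict_connectedComponentIn [T2Space X]
    [T2Space Y] [LocallyConnectedSpace Q] (hf : IsLocalHomeomorphOn f G) (hG : IsOpen G) {x₀ : X}
    (hP : P = connectedComponentIn (G ∩ f ⁻¹' Q) x₀) (hPc : IsCompact (closure P))
    (hPG : closure P ⊆ G) (hPQ : MapsTo f P Q) : IsCoveringMap (hPQ.restrict f P Q) := by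
  have hPcl : closure P ∩ f ⁻¹' Q ⊆ P := fun x ⟨hxP, hxQ⟩ ↦ by
    rw [hP] at hxP ⊢
    exact closure_connectedComponentIn_inter_subset _ _ ⟨hxP, hPG (hP ▸ hxP), hxQ⟩
  have hnhds : ∀ e ∈ P, P ∈ 𝓝[f ⁻¹' Q] e := fun e he ↦ by
    rw [hP, connectedComponentIn_eq (hP ▸ he)]
    exact hf.connectedComponentIn_mem_nhdsWithin hG (connectedComponentIn_subset _ _ (hP ▸ he))
  have hlh := hf.isLocalHomeomorph_restrict
    (hP ▸ (connectedComponentIn_subset _ _).trans inter_subset_left) hPQ hnhds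
  have hfc : ContinuousOn f (closure P) := hf.continuousOn.mono hPG
  rw [isCoveringMap_iff_isCoveringMapOn_univ]
  exact (isClosedMap_restrict_of_isCompact_closure hPQ hfc hPc hPcl)
    |>.isCoveringMapOn_of_isLocalHomeomorphOn
      (fun y _ ↦ finite_restrict_preimage_singleton hPQ hlh hfc hPc hPcl y) hlh.isLocalHomeomorphOn

theorem Set.MapsTo.bijOn_and_exists_continuousOn_inverse [Nonempty X] (hPQ : MapsTo f P Q)
    (h : P ≃ₜ Q) (hh : ⇑h = hPQ.restrict f P Q) :
    BijOn f P Q ∧ ContinuousOn f P ∧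
      ∃ g : Y → X, ContinuousOn g Q ∧ (∀ x ∈ P, g (f x) = x) ∧ ∀ y ∈ Q, f (g y) = y := by
  have hbij : BijOn f P Q :=
    ⟨hPQ, hPQ.restrict_inj.mp (hh ▸ h.injective),
      hPQ.restrict_surjective_iff.mp (hh ▸ h.surjective)⟩
  have hinv := hbij.invOn_invFunOn
  have hsymm : ∀ y : Q, Function.invFunOn f P y = h.symm y := fun y ↦ by
    have hfy : f (h.symm y) = y := by
      rw [← hPQ.val_restrict_apply, ← hh, h.apply_symm_apply]
    rw [← hfy, hinv.1 (h.symm y).2]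
  refine ⟨hbij, ?_, Function.invFunOn f P, ?_, hinv.1, hinv.2⟩
  · rw [continuousOn_iff_continuous_domRestrict]
    exact continuous_subtype_val.comp (hh ▸ h.continuous)
  · rw [continuousOn_iff_continuous_domRestrict]
    exact (continuous_subtype_val.comp h.symm.continuous).congr fun y ↦ (hsymm y).symm

end

theorem stmt_17 (n : ℕ) (G : Set (EuclideanSpace ℝ (Fin n))) (hG : IsOpen G)
    (f : EuclideanSpace ℝ (Fin n) → EuclideanSpace ℝ (Fin n))
    (hf : IsLocalHomeomorphOn f G)
    (Q : Set (EuclideanSpace ℝ (Fin n)))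
    (hQsc : SimplyConnectedSpace Q) (hQlpc : LocPathConnectedSpace Q)
    (P : Set (EuclideanSpace ℝ (Fin n)))
    (hP : ∃ x ∈ G ∩ f ⁻¹' Q, P = connectedComponentIn (G ∩ f ⁻¹' Q) x)
    (hPcl : IsCompact (closure P)) (hPG : closure P ⊆ G) :
    Set.BijOn f P Q ∧ ContinuousOn f P ∧
      ∃ g : EuclideanSpace ℝ (Fin n) → EuclideanSpace ℝ (Fin n),
        ContinuousOn g Q ∧ (∀ x ∈ P, g (f x) = x) ∧ ∀ y ∈ Q, f (g y) = y := by
  have : LocallyPathConnectedSpace Q := hQlpc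
  obtain ⟨x₀, hx₀, hPx₀⟩ := hP
  have hPQ : MapsTo f P Q := fun x hx ↦ (connectedComponentIn_subset _ _ (hPx₀ ▸ hx)).2
  have : Nonempty P := ⟨⟨x₀, hPx₀ ▸ mem_connectedComponentIn hx₀⟩⟩
  have : PreconnectedSpace P :=
    Subtype.preconnectedSpace (hPx₀ ▸ isPreconnected_connectedComponentIn)
  obtain ⟨h, hh⟩ :=
    (hf.isCoveringMap_restrict_connectedComponentIn hG hPx₀ hPcl hPG hPQ).exists_homeomorph
  exact hPQ.bijOn_and_exists_continuousOn_inverse h hh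
end
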